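/- Let a, e ∈ ℝ³ with |a| = |e| = 1 and ⟨a,e⟩ = 0. Let k, n be coprime positive integers, and let 𝛚 ∈ ℝ³ satisfy ⟨𝛚,a⟩ = 0, |𝛚| = k/n, and ⟨𝛚, e × a⟩ ≠ 0. Define x : ℝ → ℝ³ by x(t) = exp(−t[e]×)(exp(t[𝛚]×) a). Then: (i) x(πn) = (−1)^{k+n} a; (ii) for every t > 0, x(t) ∈ {a, −a} if and only if t = πnm for some positive integer m. In particular x has no early collisions: x(t) ∉ {a, −a} for 0 < t < πn. -/

import Mathlib

noncomputable section

open scoped RealInnerProductSpace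

/-- `ℝ³` with the Euclidean inner product. -/
abbrev E3 := EuclideanSpace ℝ (Fin 3)

/-- The cross product on `ℝ³`. -/
def cross3 (u v : E3) : E3 :=
  (WithLp.equiv 2 (Fin 3 → ℝ)).symm
    (crossProduct ((WithLp.equiv 2 (Fin 3 → ℝ)) u) ((WithLp.equiv 2 (Fin 3 → ℝ)) v))

/-- The skew-symmetric operator `[u]× : v ↦ u × v` as a continuous linear map. -/
def skewCLM (u : E3) : E3 →L[ℝ] E3 :=
  LinearMap.toContinuousLinearMap <|
    (WithLp.linearEquiv 2 ℝ (Fin 3 → ℝ)).symm.toLinearMap ∘ₗ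
      (crossProduct ((WithLp.equiv 2 (Fin 3 → ℝ)) u)) ∘ₗ
        (WithLp.linearEquiv 2 ℝ (Fin 3 → ℝ)).toLinearMap

/-- The rotation `exp (t [u]×)` about the axis `u` by the angle `t ‖u‖`. -/
def rot (u : E3) (t : ℝ) : E3 →L[ℝ] E3 :=
  NormedSpace.exp (t • skewCLM u)

/-! ### Coordinate lemmas for the cross product -/

lemma skewCLM_apply (u v : E3) : skewCLM u v = cross3 u v := rfl

lemma cross3_apply0 (u v : E3) : cross3 u v 0 = u 1 * v 2 - u 2 * v 1 := rfl
lemma cross3_apply1 (u v : E3) : cross3 u v 1 = u 2 * v 0 - u 0 * v 2 := rfl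
lemma cross3_apply2 (u v : E3) : cross3 u v 2 = u 0 * v 1 - u 1 * v 0 := rfl

lemma inner3 (x y : E3) : ⟪x, y⟫ = x 0 * y 0 + x 1 * y 1 + x 2 * y 2 := by
  simp [PiLp.inner_apply, Fin.sum_univ_three, mul_comm]

lemma e3_ext (x y : E3) (h0 : x 0 = y 0) (h1 : x 1 = y 1) (h2 : x 2 = y 2) : x = y := by
  ext i; fin_cases i <;> assumption

lemma cross3_self (u : E3) : cross3 u u = 0 := by
  apply e3_ext <;>
    simp [cross3_apply0, cross3_apply1, cross3_apply2] <;> ring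

lemma cross3_cross (u v w : E3) :
    cross3 u (cross3 v w) = ⟪u, w⟫ • v - ⟪u, v⟫ • w := by
  apply e3_ext <;>
    simp [cross3_apply0, cross3_apply1, cross3_apply2, inner3, Fin.sum_univ_three] <;> ring

lemma cross3_cross' (u v w : E3) :
    cross3 (cross3 u v) w = ⟪w, u⟫ • v - ⟪w, v⟫ • u := by
  apply e3_ext <;>
    simp [cross3_apply0, cross3_apply1, cross3_apply2, inner3, Fin.sum_univ_three] <;> ring

lemma cross3_add_left (u v w : E3) : cross3 (u + v) w = cross3 u w + cross3 v w := by
  apply e3_ext <;>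
    simp [cross3_apply0, cross3_apply1, cross3_apply2] <;> ring

lemma cross3_smul_left (c : ℝ) (u w : E3) : cross3 (c • u) w = c • cross3 u w := by
  apply e3_ext <;>
    simp [cross3_apply0, cross3_apply1, cross3_apply2] <;> ring

lemma cross3_add_right (u v w : E3) : cross3 u (v + w) = cross3 u v + cross3 u w := by
  apply e3_ext <;>
    simp [cross3_apply0, cross3_apply1, cross3_apply2] <;> ring

lemma cross3_smul_right (c : ℝ) (u w : E3) : cross3 u (c • w) = c • cross3 u w := by
  apply e3_ext <;>
    simp [cross3_apply0, cross3_apply1, cross3_apply2] <;> ring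

lemma cross3_zero_right (u : E3) : cross3 u 0 = 0 := by
  apply e3_ext <;>
    simp [cross3_apply0, cross3_apply1, cross3_apply2]

lemma inner_cross_left (u v : E3) : ⟪cross3 u v, u⟫ = 0 := by
  rw [inner3, cross3_apply0, cross3_apply1, cross3_apply2]; ring

lemma inner_cross_right (u v : E3) : ⟪cross3 u v, v⟫ = 0 := by
  rw [inner3, cross3_apply0, cross3_apply1, cross3_apply2]; ring

lemma lagrange3 (u v : E3) :
    ⟪cross3 u v, cross3 u v⟫ = ⟪u, u⟫ * ⟪v, v⟫ - ⟪u, v⟫ ^ 2 := by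
  simp only [inner3, cross3_apply0, cross3_apply1, cross3_apply2]; ring

lemma inner_self_of_norm_one {u : E3} (hu : ‖u‖ = 1) : ⟪u, u⟫ = 1 := by
  rw [real_inner_self_eq_norm_sq, hu]; norm_num

/-! ### Properties of `rot` -/

lemma commute_smul_smul (A : E3 →L[ℝ] E3) (t s : ℝ) : Commute (t • A) (s • A) := by
  unfold Commute SemiconjBy
  ext v
  simp [ContinuousLinearMap.mul_apply, map_smul, smul_smul, mul_comm, mul_left_comm]

lemma rot_zero (u : E3) : rot u 0 = 1 := by
  have h0 : (0:ℝ) • skewCLM u = 0 := by ext v; simp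
  rw [rot, h0, NormedSpace.exp_zero]

lemma rot_rot_neg (u : E3) (t : ℝ) (v : E3) : rot u t (rot u (-t) v) = v := by
  have h : Commute (t • skewCLM u) ((-t) • skewCLM u) :=
    commute_smul_smul (skewCLM u) t (-t)
  have h2 : rot u t * rot u (-t) = 1 := by
    letI : NormedAlgebra ℚ (E3 →L[ℝ] E3) := .restrictScalars ℚ ℝ _
    rw [rot, rot, ← NormedSpace.exp_add_of_commute h]
    have : t • skewCLM u + (-t) • skewCLM u = 0 := by
      ext v
      simp [ContinuousLinearMap.add_apply]
    rw [this, NormedSpace.exp_zero]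
  calc rot u t (rot u (-t) v) = (rot u t * rot u (-t)) v := rfl
    _ = v := by rw [h2]; rfl

lemma hasDerivAt_rot (u : E3) (t : ℝ) (v : E3) :
    HasDerivAt (fun s => rot u s v) (rot u t (skewCLM u v)) t := by
  have h := (hasDerivAt_exp_smul_const (𝕂 := ℝ) (skewCLM u) t).clm_apply
    (hasDerivAt_const t v)
  simpa [rot, ContinuousLinearMap.mul_apply] using h

lemma rot_self (u : E3) (t : ℝ) : rot u t u = u := by
  have key : ∀ s : ℝ, HasDerivAt (fun s => rot u s u) 0 s := by
    intro s
    have := hasDerivAt_rot u s u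
    simpa [skewCLM_apply, cross3_self] using this
  have hconst : (fun s => rot u s u) t = (fun s => rot u s u) 0 :=
    is_const_of_deriv_eq_zero (fun s => (key s).differentiableAt)
      (fun s => (key s).deriv) t 0
  simpa [rot_zero] using hconst

lemma hasDerivAt_rotCLM_neg (u : E3) (t : ℝ) :
    HasDerivAt (fun s : ℝ => rot u (-s))
      ((-1 : ℝ) • (NormedSpace.exp ((-t) • skewCLM u) * skewCLM u)) t := by
  have h1 := hasDerivAt_exp_smul_const (𝕂 := ℝ) (skewCLM u) (-t)
  have h2 : HasDerivAt (fun s : ℝ => -s) (-1 : ℝ) t := (hasDerivAt_id t).neg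
  exact h1.scomp t h2

/-- Rodrigues formula in the case where the axis is orthogonal to the vector. -/
lemma rot_rodrigues (u b : E3) (hub : ⟪u, b⟫ = 0) (hu : ‖u‖ ≠ 0) (t : ℝ) :
    rot u t b = Real.cos (t * ‖u‖) • b + (Real.sin (t * ‖u‖) / ‖u‖) • cross3 u b := by
  set r := ‖u‖ with hr
  set c : ℝ → E3 := fun s => Real.cos (s * r) • b + (Real.sin (s * r) / r) • cross3 u b with hc
  have huu : ⟪u, u⟫ = r ^ 2 := real_inner_self_eq_norm_sq u
  have hAc : ∀ s, skewCLM u (c s)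
      = Real.cos (s * r) • cross3 u b - (Real.sin (s * r) * r) • b := by
    intro s
    rw [skewCLM_apply, hc]
    simp only [cross3_add_right, cross3_smul_right, cross3_cross, hub, huu]
    rw [zero_smul, zero_sub, smul_neg, smul_smul, ← sub_eq_add_neg]
    have hs : Real.sin (s * r) / r * r ^ 2 = Real.sin (s * r) * r := by
      field_simp
    rw [hs]
  have hc' : ∀ s, HasDerivAt c (skewCLM u (c s)) s := by
    intro s
    have hcos : HasDerivAt (fun s : ℝ => Real.cos (s * r)) (-Real.sin (s * r) * r) s :=
      by have h := (Real.hasDerivAt_cos (s * r)).comp s (hasDerivAt_mul_const r); exact h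
    have hsin : HasDerivAt (fun s : ℝ => Real.sin (s * r) / r) (Real.cos (s * r) * r / r) s :=
      by have h := ((Real.hasDerivAt_sin (s * r)).comp s (hasDerivAt_mul_const r)).div_const r; exact h
    have := (hcos.smul_const b).add (hsin.smul_const (cross3 u b))
    rw [hAc s]
    refine this.congr_deriv ?_
    symm
    rw [mul_div_assoc, div_self hu, mul_one, sub_eq_add_neg, add_comm]
    congr 1
    rw [neg_mul, neg_smul]
  have hg : ∀ s : ℝ, HasDerivAt (fun s => rot u (-s) (c s)) 0 s := by
    intro s
    have := (hasDerivAt_rotCLM_neg u s).clm_apply (hc' s)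
    refine this.congr_deriv ?_
    symm
    rw [ContinuousLinearMap.smul_apply, ContinuousLinearMap.mul_apply]
    show (0 : E3) = (-1 : ℝ) • (rot u (-s)) (skewCLM u (c s)) + (rot u (-s)) (skewCLM u (c s))
    rw [neg_one_smul, neg_add_cancel]
  have hconst : (fun s => rot u (-s) (c s)) t = (fun s => rot u (-s) (c s)) 0 :=
    is_const_of_deriv_eq_zero (fun s => (hg s).differentiableAt) (fun s => (hg s).deriv) t 0
  have hg0 : rot u (-t) (c t) = b := by
    have hc0 : c 0 = b := by
      rw [hc]; simp
    simpa [rot_zero, hc0] using hconst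
  have := congrArg (fun v => rot u t v) hg0
  simpa [rot_rot_neg] using this.symm

lemma cos_nat_mul_pi (N : ℕ) : Real.cos (N * Real.pi) = (-1 : ℝ) ^ N := by
  have := Real.cos_nat_mul_pi_sub 0 N
  simpa using this

/-- No early collisions. -/
theorem no_early_collisions (a e ω : E3) (ha : ‖a‖ = 1) (he : ‖e‖ = 1) (hae : ⟪a, e⟫ = 0)
    (k n : ℕ) (hk : 0 < k) (hn : 0 < n) (hcop : Nat.Coprime k n)
    (hωa : ⟪ω, a⟫ = 0) (hωnorm : ‖ω‖ = (k : ℝ) / n) (hωea : ⟪ω, cross3 e a⟫ ≠ 0) :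
    let x : ℝ → E3 := fun t => rot e (-t) (rot ω t a)
    x (Real.pi * n) = ((-1 : ℝ) ^ (k + n)) • a ∧
      (∀ t : ℝ, 0 < t →
        ((x t = a ∨ x t = -a) ↔ ∃ m : ℕ, 0 < m ∧ t = Real.pi * n * m)) ∧
      ∀ t : ℝ, 0 < t → t < Real.pi * n → x t ≠ a ∧ x t ≠ -a := by
  intro x
  set q : E3 := cross3 e a with hq
  have hee : ⟪e, e⟫ = 1 := inner_self_of_norm_one he
  have haa : ⟪a, a⟫ = 1 := inner_self_of_norm_one ha
  have hea : ⟪e, a⟫ = 0 := by rw [real_inner_comm]; exact hae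
  have hqq : ⟪q, q⟫ = 1 := by rw [hq, lagrange3, hee, haa, hea]; ring
  have hqe : ⟪q, e⟫ = 0 := inner_cross_left e a
  have heq : ⟪e, q⟫ = 0 := by rw [real_inner_comm]; exact hqe
  have hqa : ⟪q, a⟫ = 0 := inner_cross_right e a
  have haq : ⟪a, q⟫ = 0 := by rw [real_inner_comm]; exact hqa
  set α := ⟪ω, e⟫ with hα
  set β := ⟪ω, q⟫ with hβ
  have hβ0 : β ≠ 0 := hωea
  have hnR : (n : ℝ) ≠ 0 := Nat.cast_ne_zero.mpr hn.ne'
  have hr0 : (0 : ℝ) < ‖ω‖ := by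
    rw [hωnorm]
    positivity
  have hrne : ‖ω‖ ≠ 0 := ne_of_gt hr0
  have he1 : ‖e‖ ≠ 0 := by rw [he]; norm_num
  -- decomposition of ω in the orthonormal basis (a, e, q)
  have hdecomp : ω = α • e + β • q := by
    set w : E3 := ω - α • e - β • q with hw
    have hwa : ⟪w, a⟫ = 0 := by
      rw [hw, inner_sub_left, inner_sub_left, real_inner_smul_left, real_inner_smul_left,
        hωa, hea, hqa]
      ring
    have hwe : ⟪w, e⟫ = 0 := by
      rw [hw, inner_sub_left, inner_sub_left, real_inner_smul_left, real_inner_smul_left,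
        hee, hqe, ← hα]
      ring
    have hwq : ⟪w, q⟫ = 0 := by
      rw [hw, inner_sub_left, inner_sub_left, real_inner_smul_left, real_inner_smul_left,
        heq, hqq, ← hβ]
      ring
    have hqw : ⟪q, w⟫ = 0 := by rw [real_inner_comm]; exact hwq
    have h1 : cross3 q w = 0 := by
      rw [hq, cross3_cross', hwe, hwa]
      simp
    have h2 : cross3 q (cross3 q w) = 0 := by rw [h1, cross3_zero_right]
    rw [cross3_cross, hqw, hqq] at h2
    rw [zero_smul, one_smul, zero_sub, neg_eq_zero] at h2
    have : ω - (α • e + β • q) = 0 := by rw [← sub_sub]; exact h2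
    have := sub_eq_zero.mp this
    exact this
  -- Rodrigues for rotations about e
  have hrotE : ∀ (b : E3), ⟪e, b⟫ = 0 → ∀ s : ℝ,
      rot e s b = Real.cos s • b + Real.sin s • cross3 e b := by
    intro b hb s
    have h := rot_rodrigues e b hb he1 s
    rw [he] at h
    simpa using h
  -- the explicit formula for the trajectory
  have hX : ∀ t : ℝ, x t
      = (Real.cos (t * ‖ω‖) * Real.cos t + Real.sin (t * ‖ω‖) / ‖ω‖ * α * Real.sin t) • a
        + (-(Real.sin (t * ‖ω‖) / ‖ω‖ * β)) • e
        + (Real.sin (t * ‖ω‖) / ‖ω‖ * α * Real.cos t - Real.cos (t * ‖ω‖) * Real.sin t) • q := by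
    intro t
    have h1 : rot ω t a
        = Real.cos (t * ‖ω‖) • a + (Real.sin (t * ‖ω‖) / ‖ω‖) • cross3 ω a :=
      rot_rodrigues ω a hωa hrne t
    have hcr : cross3 ω a = α • q - β • e := by
      conv_lhs => rw [hdecomp]
      rw [cross3_add_left, cross3_smul_left, cross3_smul_left, ← hq, hq, cross3_cross',
        hae, haa]
      module
    have h2 : rot e (-t) a = Real.cos t • a - Real.sin t • q := by
      rw [hrotE a hea (-t), Real.cos_neg, Real.sin_neg, ← hq]
      module
    have hcEq : cross3 e q = -a := by
      rw [hq, cross3_cross, hea, hee]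
      module
    have h3 : rot e (-t) q = Real.cos t • q + Real.sin t • a := by
      rw [hrotE q heq (-t), hcEq, Real.cos_neg, Real.sin_neg]
      module
    have h4 : rot e (-t) e = e := rot_self e (-t)
    show rot e (-t) (rot ω t a) = _
    rw [h1, hcr]
    rw [map_add, map_smul, map_smul, map_sub, map_smul, map_smul, h2, h3, h4]
    match_scalars <;> ring
  -- value at the collision times
  have hXm : ∀ m : ℕ, x (Real.pi * n * m) = ((-1 : ℝ) ^ (k * m + n * m)) • a := by
    intro m
    have htr : (Real.pi * n * m) * ‖ω‖ = ((k * m : ℕ) : ℝ) * Real.pi := by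
      rw [hωnorm]; push_cast; field_simp
    have ht : (Real.pi * n * m : ℝ) = ((n * m : ℕ) : ℝ) * Real.pi := by push_cast; ring
    rw [hX, htr, ht]
    simp only [Real.sin_nat_mul_pi, cos_nat_mul_pi]
    rw [pow_add]
    match_scalars <;> ring
  -- the component lemmas
  have hcompE : ∀ A B C : ℝ, ⟪A • a + B • e + C • q, e⟫ = B := by
    intro A B C
    rw [inner_add_left, inner_add_left, real_inner_smul_left, real_inner_smul_left,
      real_inner_smul_left, hae, hee, hqe]
    ring
  have hcompQ : ∀ A B C : ℝ, ⟪A • a + B • e + C • q, q⟫ = C := by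
    intro A B C
    rw [inner_add_left, inner_add_left, real_inner_smul_left, real_inner_smul_left,
      real_inner_smul_left, haq, heq, hqq]
    ring
  -- the main equivalence
  have hiff : ∀ t : ℝ, 0 < t →
      ((x t = a ∨ x t = -a) ↔ ∃ m : ℕ, 0 < m ∧ t = Real.pi * n * m) := by
    intro t ht
    constructor
    · intro hcol
      have hxe : ⟪x t, e⟫ = 0 := by
        rcases hcol with h | h <;> rw [h] <;> simp [inner_neg_left, hae]
      have hxq : ⟪x t, q⟫ = 0 := by
        rcases hcol with h | h <;> rw [h] <;> simp [inner_neg_left, haq]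
      rw [hX t, hcompE] at hxe
      rw [hX t, hcompQ] at hxq
      -- sin (t‖ω‖) = 0
      have hs1 : Real.sin (t * ‖ω‖) = 0 := by
        have h1 : Real.sin (t * ‖ω‖) / ‖ω‖ * β = 0 := by linarith [neg_eq_zero.mp hxe]
        have h2 := (mul_eq_zero.mp h1).resolve_right hβ0
        exact (div_eq_zero_iff.mp h2).resolve_right hrne
      have hcosne : Real.cos (t * ‖ω‖) ≠ 0 := by
        have hsq := Real.sin_sq_add_cos_sq (t * ‖ω‖)
        rw [hs1] at hsq
        intro h
        rw [h] at hsq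
        norm_num at hsq
      have hs2 : Real.sin t = 0 := by
        rw [hs1] at hxq
        have h2 : Real.cos (t * ‖ω‖) * Real.sin t = 0 := by
          have : (0:ℝ) / ‖ω‖ * α * Real.cos t = 0 := by ring
          linarith [hxq]
        exact (mul_eq_zero.mp h2).resolve_left hcosne
      -- integer analysis
      obtain ⟨i, hi⟩ := Real.sin_eq_zero_iff.mp hs2
      obtain ⟨j, hj⟩ := Real.sin_eq_zero_iff.mp hs1
      have hπ : Real.pi ≠ 0 := Real.pi_ne_zero
      have h3 : (i : ℝ) * Real.pi * ((k : ℝ) / (n : ℝ)) = (j : ℝ) * Real.pi := by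
        rw [hi, ← hωnorm]
        exact hj.symm
      have hreal : (i : ℝ) * (k : ℝ) = (j : ℝ) * (n : ℝ) := by
        have h4 : ((i : ℝ) * (k : ℝ)) * Real.pi = ((j : ℝ) * (n : ℝ)) * Real.pi := by
          field_simp at h3
          linear_combination Real.pi * h3
        exact mul_right_cancel₀ hπ h4
      have hikZ : i * (k : ℤ) = j * (n : ℤ) := by exact_mod_cast hreal
      have hdvd : (n : ℤ) ∣ i * (k : ℤ) := ⟨j, by rw [hikZ]; ring⟩
      have hni : (n : ℤ) ∣ i :=
        (Nat.isCoprime_iff_coprime.mpr hcop.symm).dvd_of_dvd_mul_right hdvd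
      obtain ⟨m', hm'⟩ := hni
      have htm : t = Real.pi * n * (m' : ℝ) := by
        rw [← hi, hm']
        push_cast
        ring
      have hm'pos : 0 < m' := by
        by_contra hcon
        push_neg at hcon
        have hm'R : (m' : ℝ) ≤ 0 := by exact_mod_cast hcon
        have hpn : (0:ℝ) < Real.pi * n := by positivity
        have hle : Real.pi * n * (m' : ℝ) ≤ 0 :=
          mul_nonpos_iff.mpr (Or.inl ⟨hpn.le, hm'R⟩)
        rw [htm] at ht
        linarith
      refine ⟨m'.toNat, by omega, ?_⟩
      rw [htm]
      have hcast : ((m'.toNat : ℕ) : ℝ) = (m' : ℝ) := by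
        exact_mod_cast Int.toNat_of_nonneg hm'pos.le
      rw [hcast]
    · rintro ⟨m, hm, rfl⟩
      have hx := hXm m
      rcases Nat.even_or_odd (k * m + n * m) with hpar | hpar
      · left
        rw [hx, hpar.neg_one_pow, one_smul]
      · right
        rw [hx, hpar.neg_one_pow, neg_smul, one_smul]
  refine ⟨?_, hiff, ?_⟩
  · simpa using hXm 1
  · intro t ht htlt
    constructor <;> intro h
    · obtain ⟨m, hm, heqt⟩ := (hiff t ht).mp (Or.inl h)
      have hm1 : (1 : ℝ) ≤ m := by exact_mod_cast hm
      have hn1 : (1 : ℝ) ≤ n := by exact_mod_cast hn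
      nlinarith [Real.pi_pos]
    · obtain ⟨m, hm, heqt⟩ := (hiff t ht).mp (Or.inr h)
      have hm1 : (1 : ℝ) ≤ m := by exact_mod_cast hm
      have hn1 : (1 : ℝ) ≤ n := by exact_mod_cast hn
      nlinarith [Real.pi_pos]
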